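/- Consider H = SL(2,ℂ) embedded in SL(6,ℂ) as the upper-left 2×2 block (with identity elsewhere), acting on 6×6 matrices by h·M = h M hᵀ. Let v = diag(J,J,J) as above and let g be the 6×6 matrix equal to the identity except g₀₂ = 1, and set x = g v gᵀ. Then the stabilizer of x in H is {upper-left block [[1,a],[0,1]] : a ∈ ℂ}, a group isomorphic to the additive group (ℂ, +); in particular the stabilizer H_x is a nontrivial unipotent (hence non-reductive) abelian group. -/

import Mathlib

open Matrix

noncomputable def vJJJ6 : Matrix (Fin 6) (Fin 6) ℂ :=
  !![0, 1, 0, 0, 0, 0;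
     -1, 0, 0, 0, 0, 0;
     0, 0, 0, 1, 0, 0;
     0, 0, -1, 0, 0, 0;
     0, 0, 0, 0, 0, 1;
     0, 0, 0, 0, -1, 0]

/-- The embedding of a 2×2 matrix as the upper-left block of a 6×6 matrix,
with the identity in the lower-right 4×4 block. -/
noncomputable def upperLeftEmbed (A : Matrix (Fin 2) (Fin 2) ℂ) : Matrix (Fin 6) (Fin 6) ℂ :=
  Matrix.reindex finSumFinEquiv finSumFinEquiv
    (Matrix.fromBlocks A 0 0 (1 : Matrix (Fin 4) (Fin 4) ℂ))

/-- The matrix g : identity except entry (0,2) equals 1. -/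
noncomputable def gShear : Matrix (Fin 6) (Fin 6) ℂ :=
  1 + Matrix.single 0 2 1

/-!
Split `Fin 6` as `Fin 2 ⊕ Fin 4`. Then `x = g v gᵀ = [[J, E], [-Eᵀ, D]]` with `E = e₀ e₁ᵀ`, and
`ι(A) x ι(A)ᵀ = [[A J Aᵀ, A E], [-(A E)ᵀ, D]]`. Since `A J Aᵀ = det A • J = J`, the matrix `A`
fixes `x` exactly when `A E = E`, i.e. when `A e₀ = e₀`; together with `det A = 1` this says
`A = [[1, a], [0, 1]]`.
-/

namespace Matrix

variable {l m n R : Type*}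

theorem reindex_mul_mul_transpose [Fintype m] [Fintype n] [Semiring R] (e : m ≃ n)
    (X M : Matrix m m R) :
    reindex e e (X * M * Xᵀ) = reindex e e X * reindex e e M * (reindex e e X)ᵀ := by
  simp [reindex_apply, submatrix_mul_equiv, transpose_submatrix]

theorem fromBlocks_mul_fromBlocks_mul_transpose [Fintype l] [Fintype m] [DecidableEq m]
    [Semiring R] (A P : Matrix l l R) (Q : Matrix l m R) (S : Matrix m l R)
    (T : Matrix m m R) :
    fromBlocks A 0 0 1 * fromBlocks P Q S T * (fromBlocks A 0 0 1)ᵀ =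
      fromBlocks (A * P * Aᵀ) (A * Q) (S * Aᵀ) T := by
  simp [fromBlocks_multiply, fromBlocks_transpose]

theorem mul_single_one_eq_self_iff [Fintype m] [DecidableEq m] [DecidableEq n] [Semiring R]
    (A : Matrix m m R) (i : m) (j : n) :
    A * single i j (1 : R) = single i j 1 ↔ A.col i = Pi.single i 1 := by
  rw [mul_single_eq_updateCol_zero, single_eq_updateCol_zero]
  exact ⟨fun h ↦ funext fun k ↦ by simpa using congrFun (congrFun h k) j, fun h ↦ by simp [h]⟩

theorem fin_two_mul_J_mul_transpose [CommRing R] (A : Matrix (Fin 2) (Fin 2) R) :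
    A * !![0, 1; -1, 0] * Aᵀ = A.det • !![0, 1; -1, 0] := by
  ext i j
  fin_cases i <;> fin_cases j <;> simp [det_fin_two, mul_apply, Fin.sum_univ_two] <;> ring

theorem SpecialLinearGroup.col_zero_eq_single_iff_fin_two [CommRing R]
    (A : SpecialLinearGroup (Fin 2) R) :
    A.val.col 0 = Pi.single 0 1 ↔ A.val 0 0 = 1 ∧ A.val 1 1 = 1 ∧ A.val 1 0 = 0 := by
  have hdet := A.det_coe
  rw [det_fin_two] at hdet
  simp only [funext_iff, Fin.forall_fin_two, col_apply, Pi.single_eq_same,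
    Pi.single_eq_of_ne one_ne_zero]
  constructor
  · rintro ⟨h00, h10⟩
    exact ⟨h00, by simpa [h00, h10] using hdet, h10⟩
  · rintro ⟨h00, -, h10⟩
    exact ⟨h00, h10⟩

end Matrix

theorem gShear_mul_vJJJ6_mul_transpose :
    gShear * vJJJ6 * gShearᵀ = reindex finSumFinEquiv finSumFinEquiv
      (fromBlocks !![0, 1; -1, 0] (single 0 1 1) (-(single 0 1 1)ᵀ)
        !![0, 1, 0, 0; -1, 0, 0, 0; 0, 0, 0, 1; 0, 0, -1, 0]) := by
  ext i j
  fin_cases i <;> fin_cases j <;>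
    simp [gShear, vJJJ6, mul_apply, Fin.sum_univ_six, one_apply, single, fromBlocks,
      finSumFinEquiv, Fin.addCases, Fin.subNat]

theorem stabilizer_is_unipotent
    (A : Matrix.SpecialLinearGroup (Fin 2) ℂ) :
    upperLeftEmbed A.val * (gShear * vJJJ6 * gShearᵀ) * (upperLeftEmbed A.val)ᵀ =
        gShear * vJJJ6 * gShearᵀ ↔
      A.val 0 0 = 1 ∧ A.val 1 1 = 1 ∧ A.val 1 0 = 0 := by
  rw [gShear_mul_vJJJ6_mul_transpose, upperLeftEmbed, ← reindex_mul_mul_transpose,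
    (reindex _ _).injective.eq_iff, fromBlocks_mul_fromBlocks_mul_transpose, fromBlocks_inj,
    fin_two_mul_J_mul_transpose, A.det_coe, one_smul, Matrix.neg_mul, neg_inj,
    ← transpose_mul, transpose_inj, and_iff_right rfl, and_self_left, and_iff_left rfl,
    mul_single_one_eq_self_iff, SpecialLinearGroup.col_zero_eq_single_iff_fin_two]
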